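/- Let {B_k}_{k∈ℕ} be an enumeration of all closed cubes in ℝ^n whose sides are parallel to the coordinate axes, whose centers have all coordinates rational, and whose edge length equals 1/(2^{l−1}√n) for some l ∈ ℕ, l ≥ 1. Fix positive reals t_k with Σ_{k=1}^∞ t_k = 1, and for f ∈ L^p(ℝ^n), 1 ≤ p < ∞, define the KS^p-norm ‖f‖_{KS^p} = (Σ_{k=1}^∞ t_k |∫_{B_k} f dλ_n|^p)^{1/p}. If K is a subset of L^p(ℝ^n) that is compact in the weak topology of L^p(ℝ^n), then K is compact with respect to the metric d(f, g) = ‖f − g‖_{KS^p}. -/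

import Mathlib

/-! Each `f ↦ ∫_{B_k} f` is a continuous linear functional of norm at most one on `L^p`
(Hölder, as `λ_n(B_k) ≤ 1`), hence weakly continuous. A weakly compact set is norm bounded by
the uniform boundedness principle, so on `K` the series `Σ t_k |∫_{B_k} (f - g)|^p` converges
uniformly and `f ↦ d(f, g)` is weakly continuous on `K`. Every `d`-ball therefore meets `K` in a
relatively weakly open set: the identity from `(K, weak)` to `(K, d)` is continuous, and the image
of a compact set is compact. -/

open MeasureTheory
open scoped ENNReal

/-- The closed cube in `ℝ^n` with center `c ∈ ℚ^n`, sides parallel to the coordinate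
axes, and edge length `1/(2^(l-1) √n)`: the closed ball of radius half the edge length
around `c` in the sup metric on `ℝ^n`. -/
def ratCube (n : ℕ) (c : Fin n → ℚ) (l : ℕ) : Set (Fin n → ℝ) :=
  Metric.closedBall (fun i => (c i : ℝ)) (1 / (2 ^ (l - 1) * Real.sqrt n) / 2)

/-- `B : ℕ → Set ℝ^n` enumerates the family of all closed cubes with sides parallel to
the coordinate axes, rational centers, and edge length `1/(2^(l-1) √n)` for some
`l ≥ 1`. -/
def EnumeratesRatCubes (n : ℕ) (B : ℕ → Set (Fin n → ℝ)) : Prop :=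
  (∀ k, ∃ (c : Fin n → ℚ) (l : ℕ), 1 ≤ l ∧ B k = ratCube n c l) ∧
  (∀ (c : Fin n → ℚ) (l : ℕ), 1 ≤ l → ∃ k, B k = ratCube n c l)

/-- The `KS^p` norm `(Σ_k t_k |∫_{B_k} f dλ_n|^p)^{1/p}` (for `p < ∞`), resp.
`sup_k |∫_{B_k} f dλ_n|` (for `p = ∞`). -/
noncomputable def KSnorm (n : ℕ) (B : ℕ → Set (Fin n → ℝ)) (t : ℕ → ℝ) (p : ℝ≥0∞)
    (f : (Fin n → ℝ) → ℂ) : ℝ :=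
  if p = ⊤ then ⨆ k, ‖∫ x in B k, f x ∂volume‖
  else (∑' k, t k * ‖∫ x in B k, f x ∂volume‖ ^ p.toReal) ^ (1 / p.toReal)

open Bornology

theorem ratCube_volume_le_one (n : ℕ) (c : Fin n → ℚ) (l : ℕ) :
    volume (ratCube n c l) ≤ 1 := by
  have hedge : 1 / (2 ^ (l - 1) * Real.sqrt n) ≤ 1 := by
    rcases Nat.eq_zero_or_pos n with rfl | hn
    · simp
    · refine div_le_one_of_le₀ (one_le_mul_of_one_le_of_one_le (one_le_pow₀ one_le_two) ?_)
        (by positivity)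
      exact Real.one_le_sqrt.mpr (by exact_mod_cast hn)
  rw [ratCube, Real.volume_pi_closedBall _ (by positivity), Fintype.card_fin,
    ← ENNReal.ofReal_one]
  exact ENNReal.ofReal_le_ofReal (pow_le_one₀ (by positivity) (by linarith))

section SetIntegral

variable {α E : Type*} [MeasurableSpace α] {μ : Measure α} [NormedAddCommGroup E]
  [NormedSpace ℝ E] {p : ℝ≥0∞} [Fact (1 ≤ p)] {s : Set α}

theorem norm_setIntegral_le_norm_Lp (f : Lp E p μ) (hs : μ s ≤ 1) :
    ‖∫ x in s, f x ∂μ‖ ≤ ‖f‖ := by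
  have hL1 : eLpNorm f 1 (μ.restrict s) ≤ eLpNorm f p μ :=
    calc eLpNorm f 1 (μ.restrict s)
        ≤ eLpNorm f p (μ.restrict s) *
            μ.restrict s Set.univ ^ (1 / (1 : ℝ≥0∞).toReal - 1 / p.toReal) :=
          eLpNorm_le_eLpNorm_mul_rpow_measure_univ Fact.out (Lp.aestronglyMeasurable f).restrict
      _ ≤ eLpNorm f p μ * 1 := by
          gcongr
          · exact Measure.restrict_le_self
          · rw [Measure.restrict_apply_univ]
            have hp_inv : 1 / p.toReal ≤ 1 := by
              simpa [← ENNReal.toReal_inv] using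
                ENNReal.toReal_mono ENNReal.one_ne_top (ENNReal.inv_le_one.2 Fact.out)
            exact ENNReal.rpow_le_one hs (by simpa using hp_inv)
      _ = eLpNorm f p μ := mul_one _
  rw [← toReal_enorm, Lp.norm_def]
  refine ENNReal.toReal_mono (Lp.eLpNorm_ne_top f) (le_trans ?_ hL1)
  rw [eLpNorm_one_eq_lintegral_enorm]
  exact enorm_integral_le_lintegral_enorm _

variable (𝕜 : Type*) [NontriviallyNormedField 𝕜] [NormedSpace 𝕜 E] [SMulCommClass ℝ 𝕜 E]

noncomputable def setIntegralCLM (μ : Measure α) (p : ℝ≥0∞) [Fact (1 ≤ p)] (s : Set α)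
    (hs : μ s ≤ 1) : Lp E p μ →L[𝕜] E :=
  haveI : IsFiniteMeasure (μ.restrict s) :=
    ⟨by rw [Measure.restrict_apply_univ]; exact hs.trans_lt ENNReal.one_lt_top⟩
  have hint (f : Lp E p μ) : Integrable f (μ.restrict s) :=
    ((Lp.memLp f).restrict s).integrable Fact.out
  LinearMap.mkContinuous
    { toFun := fun f => ∫ x in s, f x ∂μ
      map_add' := fun f g => by
        rw [integral_congr_ae (Lp.coeFn_add f g).restrict]
        exact integral_add (hint f) (hint g)
      map_smul' := fun c f => by
        rw [integral_congr_ae (Lp.coeFn_smul c f).restrict]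
        exact integral_smul c _ }
    1 fun f => by simpa using norm_setIntegral_le_norm_Lp f hs

theorem setIntegralCLM_apply (hs : μ s ≤ 1) (f : Lp E p μ) :
    setIntegralCLM 𝕜 μ p s hs f = ∫ x in s, f x ∂μ :=
  rfl

end SetIntegral

section WeakTopology

variable {𝕜 E : Type*} [RCLike 𝕜] [NormedAddCommGroup E] [NormedSpace 𝕜 E]

theorem isBounded_of_isCompact_weakSpace {K : Set E} (hK : IsCompact (X := WeakSpace 𝕜 E) K) :
    IsBounded K := by
  have hpointwise (ψ : StrongDual 𝕜 E) :
      ∃ C, ∀ x : K, ‖NormedSpace.inclusionInDoubleDual 𝕜 E x ψ‖ ≤ C := by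
    obtain ⟨C, hC⟩ := (hK.image (WeakBilin.eval_continuous _ ψ)).isBounded.exists_norm_le
    exact ⟨C, fun x => hC _ (Set.mem_image_of_mem _ x.2)⟩
  obtain ⟨C, hC⟩ := banach_steinhaus hpointwise
  refine isBounded_iff_forall_norm_le.2 ⟨C, fun x hx => ?_⟩
  rw [← (NormedSpace.inclusionInDoubleDualLi 𝕜).norm_map x]
  exact hC ⟨x, hx⟩

theorem continuousOn_tsum_mul_norm_rpow_weakSpace (φ : ℕ → StrongDual 𝕜 E)
    (hφ : ∀ k x, ‖φ k x‖ ≤ ‖x‖) {t : ℕ → ℝ} (ht : Summable t) {q : ℝ} (hq : 0 ≤ q)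
    {K : Set E} (hK : IsBounded K) (y : E) :
    ContinuousOn (fun x : WeakSpace 𝕜 E => ∑' k, t k * ‖φ k x - φ k y‖ ^ q) K := by
  obtain ⟨M, hM⟩ := hK.exists_norm_le
  refine continuousOn_tsum (fun k => Continuous.continuousOn ?_) (ht.abs.mul_right ((M + ‖y‖) ^ q))
    fun k x hx => ?_
  · have hφk : Continuous fun x : WeakSpace 𝕜 E => φ k x := WeakBilin.eval_continuous _ (φ k)
    exact continuous_const.mul (((hφk.sub continuous_const).norm).rpow_const fun _ => Or.inr hq)
  · rw [norm_mul, Real.norm_eq_abs, Real.norm_of_nonneg (by positivity)]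
    gcongr
    exact (norm_sub_le _ _).trans (add_le_add ((hφ k x).trans (hM x hx)) (hφ k y))

end WeakTopology

theorem IsCompact.image_generateFrom {X Y : Type*} [TopologicalSpace X] {K : Set X}
    (hK : IsCompact K) {f : X → Y} {P : Set (Set Y)}
    (hP : ∀ S ∈ P, ∃ U, IsOpen U ∧ f ⁻¹' S ∩ K = U ∩ K) :
    @IsCompact Y (TopologicalSpace.generateFrom P) (f '' K) := by
  let _ : TopologicalSpace Y := TopologicalSpace.generateFrom P
  refine hK.image_of_continuousOn (continuousOn_iff_continuous_domRestrict.2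
    (continuous_generateFrom_iff.2 fun S hS => ?_))
  obtain ⟨U, hU, hSU⟩ := hP S hS
  refine isOpen_induced_iff.2 ⟨U, hU, Set.ext fun x => ?_⟩
  simpa using (Set.ext_iff.1 hSU x).symm

theorem KSnorm_coeFn_sub {n : ℕ} {B : ℕ → Set (Fin n → ℝ)} (t : ℕ → ℝ) {p : ℝ≥0∞} [Fact (1 ≤ p)]
    (hp : p ≠ ⊤) (hB : ∀ k, volume (B k) ≤ 1) (f g : Lp ℂ p (volume : Measure (Fin n → ℝ))) :
    KSnorm n B t p (⇑f - ⇑g) =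
      (∑' k, t k * ‖setIntegralCLM ℂ volume p (B k) (hB k) f -
        setIntegralCLM ℂ volume p (B k) (hB k) g‖ ^ p.toReal) ^ (1 / p.toReal) := by
  simp_rw [KSnorm, if_neg hp, ← map_sub, setIntegralCLM_apply]
  congr! 6 with k
  exact integral_congr_ae (Lp.coeFn_sub f g).restrict.symm

theorem weakly_compact_is_KS_compact_general
    (n : ℕ) (B : ℕ → Set (Fin n → ℝ)) (hB : EnumeratesRatCubes n B)
    (t : ℕ → ℝ) (hts : ∑' k, t k = 1)
    (p : ℝ≥0∞) [Fact (1 ≤ p)] (hp' : p ≠ ⊤)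
    (K : Set (Lp ℂ p (volume : Measure (Fin n → ℝ))))
    (hK : @IsCompact (WeakSpace ℂ (Lp ℂ p (volume : Measure (Fin n → ℝ)))) _ K) :
    @IsCompact (Lp ℂ p (volume : Measure (Fin n → ℝ)))
      (TopologicalSpace.generateFrom
        {S | ∃ (g : Lp ℂ p (volume : Measure (Fin n → ℝ))) (r : ℝ), 0 < r ∧
          S = {f : Lp ℂ p (volume : Measure (Fin n → ℝ)) | KSnorm n B t p (⇑f - ⇑g) < r}})
      K := by
  have hvol (k : ℕ) : volume (B k) ≤ 1 := by
    obtain ⟨c, l, -, hk⟩ := hB.1 k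
    exact hk ▸ ratCube_volume_le_one n c l
  have ht : Summable t := by
    by_contra h
    simp [tsum_eq_zero_of_not_summable h] at hts
  have hKS (g : Lp ℂ p (volume : Measure (Fin n → ℝ))) :
      @ContinuousOn (WeakSpace ℂ (Lp ℂ p (volume : Measure (Fin n → ℝ)))) ℝ _ _
        (fun f : Lp ℂ p (volume : Measure (Fin n → ℝ)) => KSnorm n B t p (⇑f - ⇑g)) K := by
    simp_rw [KSnorm_coeFn_sub t hp' hvol]
    refine (continuousOn_tsum_mul_norm_rpow_weakSpace _ (fun k f => ?_) ht ENNReal.toReal_nonneg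
      (isBounded_of_isCompact_weakSpace hK) g).rpow_const
      fun _ _ => Or.inr (one_div_nonneg.2 ENNReal.toReal_nonneg)
    exact norm_setIntegral_le_norm_Lp f (hvol k)
  refine Set.image_id K ▸ hK.image_generateFrom (f := id) ?_
  rintro S ⟨g, r, -, rfl⟩
  exact continuousOn_iff'.1 (hKS g) (Set.Iio r) isOpen_Iio

/-- a weakly compact subset `K` of `L^p(ℝ^n)`, `1 ≤ p < ∞`, is compact
with respect to the metric `d(f,g) = ‖f - g‖_{KS^p}` (whose topology is generated by
the `KS^p`-balls). -/
theorem weakly_compact_is_KS_compact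
    (n : ℕ) (B : ℕ → Set (Fin n → ℝ)) (hB : EnumeratesRatCubes n B)
    (t : ℕ → ℝ) (ht : ∀ k, 0 < t k) (hts : ∑' k, t k = 1)
    (p : ℝ≥0∞) [Fact (1 ≤ p)] (hp' : p ≠ ⊤)
    (K : Set (Lp ℂ p (volume : Measure (Fin n → ℝ))))
    (hK : @IsCompact (WeakSpace ℂ (Lp ℂ p (volume : Measure (Fin n → ℝ)))) _ K) :
    @IsCompact (Lp ℂ p (volume : Measure (Fin n → ℝ)))
      (TopologicalSpace.generateFrom
        {S | ∃ (g : Lp ℂ p (volume : Measure (Fin n → ℝ))) (r : ℝ), 0 < r ∧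
          S = {f : Lp ℂ p (volume : Measure (Fin n → ℝ)) | KSnorm n B t p (⇑f - ⇑g) < r}})
      K :=
  weakly_compact_is_KS_compact_general n B hB t hts p hp' K hK
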